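/- If G is a finite simple bipartite graph with at least one edge, then G is not a universal fixer; that is, there exists a permutation π of V(G) with γ(πG) > γ(G). -/

import Mathlib

open SimpleGraph

variable {V : Type*}

/-- `D` is a dominating set of `G`: every vertex is in `D` or adjacent to a vertex of `D`. -/
def IsDomSet (G : SimpleGraph V) (D : Set V) : Prop :=
  ∀ v : V, ∃ d ∈ D, d = v ∨ G.Adj d v

/-- The domination number of `G`: minimum cardinality of a dominating set. -/
noncomputable def domNum (G : SimpleGraph V) : ℕ :=
  sInf {n | ∃ D : Set V, IsDomSet G D ∧ D.ncard = n}

/-- The prism `πG` of `G`: two disjoint copies of `G` together with the matching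
`{u (π u) : u ∈ V(G)}`, the second copy playing the role of `G'`. -/
def prism (G : SimpleGraph V) (π : Equiv.Perm V) : SimpleGraph (V ⊕ V) where
  Adj a b :=
    match a, b with
    | Sum.inl u, Sum.inl v => G.Adj u v
    | Sum.inr u, Sum.inr v => G.Adj u v
    | Sum.inl u, Sum.inr v => π u = v
    | Sum.inr u, Sum.inl v => π v = u
  symm := by
    constructor
    rintro (u | u) (v | v) h
    · exact G.symm.symm _ _ h
    · exact h
    · exact h
    · exact G.symm.symm _ _ h
  loopless := by
    constructor
    rintro (u | u) h
    · exact G.loopless.irrefl u h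
    · exact G.loopless.irrefl u h

/-- The closed neighborhood `N[v]` of a vertex. -/
def closedNbhd (G : SimpleGraph V) (v : V) : Set V :=
  insert v (G.neighborSet v)

/-- `x` is a `C₃`-free vertex: non-isolated and belonging to no triangle of `G`. -/
def C3Free (G : SimpleGraph V) (x : V) : Prop :=
  (∃ y, G.Adj x y) ∧ ∀ u v : V, G.Adj x u → G.Adj x v → ¬ G.Adj u v

/-- `A = A1 ∪ A2` is a separable γ-set of `G` (an `A1`-γ-set): `A1, A2` are nonempty,
disjoint, `A` is a γ-set, and `A1` dominates `V(G) - A`. -/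
def SepGammaSet (G : SimpleGraph V) (A1 A2 : Set V) : Prop :=
  A1.Nonempty ∧ A2.Nonempty ∧ Disjoint A1 A2 ∧
  IsDomSet G (A1 ∪ A2) ∧ (A1 ∪ A2).ncard = domNum G ∧
  ∀ v ∉ A1 ∪ A2, ∃ u ∈ A1, G.Adj u v

/-- The separable γ-set `A = A1 ∪ A2` is effective under `π`: `π(A)` is a γ-set of the
copy `G'` of `G` (identified with `G`) whose dominating part is `B2' = π(A2)`,
i.e. `π(A2)` dominates `V(G') - π(A)`. -/
def Effective (G : SimpleGraph V) (π : Equiv.Perm V) (A1 A2 : Set V) : Prop :=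
  IsDomSet G (⇑π '' (A1 ∪ A2)) ∧ (⇑π '' (A1 ∪ A2)).ncard = domNum G ∧
  ∀ v ∉ ⇑π '' (A1 ∪ A2), ∃ u ∈ ⇑π '' A2, G.Adj u v

/-- The star `K_{1,m}` on `Fin (m+1)`, with center `0` adjacent to the `m` leaves. -/
def starGraph (m : ℕ) : SimpleGraph (Fin (m + 1)) where
  Adj a b := (a = 0 ∧ b ≠ 0) ∨ (b = 0 ∧ a ≠ 0)
  symm := ⟨fun a b h => Or.symm h⟩
  loopless := ⟨fun a h => by rcases h with ⟨h1, h2⟩ | ⟨h1, h2⟩ <;> exact h2 h1⟩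

/-!
Let `x` be a vertex with a neighbour; in a bipartite graph `N(x)` is independent. Take `π` to
cycle the closed neighbourhood `N[x]` and fix every other vertex. Projecting a dominating set of
`πG` to `G` shows `γ(πG) ≥ γ(G)`. If equality held, a γ-set `X ⊔ Y` of `πG` (with `X` in `G` and
`Y` in `G'`) would give two separable γ-sets of `G`: `X ∪ π⁻¹Y`, in which `X` dominates the rest,
and symmetrically `Y ∪ πX`, in which `Y` dominates the rest. By minimality, no vertex of the
second part of a separable γ-set has a neighbour in the set. Since vertices off `N[x]` are fixed
by `π`, and a neighbour of a neighbour of `x` other than `x` lies off `N[x]`, this forces `x` out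
of both γ-sets and makes the intersection of `X ∪ π⁻¹Y` with `N[x]` closed under `π`. It contains
the vertex dominating `x`, so following the cycle it contains `x`: a contradiction.
-/

open Set

theorem Set.ncard_preimage_inl_add_ncard_preimage_inr {W : Type*} (E : Set (V ⊕ W))
    (hE : E.Finite := by toFinite_tac) :
    (Sum.inl ⁻¹' E).ncard + (Sum.inr ⁻¹' E).ncard = E.ncard := by
  conv_rhs => rw [← image_preimage_inl_union_image_preimage_inr E]
  rw [ncard_union_eq disjoint_image_inl_image_inr (hE.subset (image_preimage_subset _ _))
    (hE.subset (image_preimage_subset _ _)), ncard_image_of_injective _ Sum.inl_injective,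
    ncard_image_of_injective _ Sum.inr_injective]

theorem Equiv.Perm.ncard_preimage (π : Equiv.Perm V) (s : Set V) : (π ⁻¹' s).ncard = s.ncard :=
  ncard_preimage_of_injective_subset_range π.injective (by simp)

def DominatesOff (G : SimpleGraph V) (D₁ D₂ : Set V) : Prop :=
  ∀ v ∉ D₂, v ∈ D₁ ∨ ∃ u ∈ D₁, G.Adj u v

section Domination

variable {G : SimpleGraph V} {D₁ D₂ : Set V}

theorem domNum_le_ncard {D : Set V} (hD : IsDomSet G D) : domNum G ≤ D.ncard :=
  Nat.sInf_le ⟨D, hD, rfl⟩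

theorem exists_isDomSet_ncard_eq_domNum (G : SimpleGraph V) :
    ∃ D : Set V, IsDomSet G D ∧ D.ncard = domNum G :=
  Nat.sInf_mem (s := {n | ∃ D : Set V, IsDomSet G D ∧ D.ncard = n})
    ⟨_, univ, fun v => ⟨v, mem_univ v, Or.inl rfl⟩, rfl⟩

theorem domNum_lt_card_of_adj [Finite V] {u v : V} (huv : G.Adj u v) :
    domNum G < Nat.card V := by
  have hdom : IsDomSet G {u}ᶜ := fun w => by
    by_cases hw : w = u
    · exact ⟨v, G.ne_of_adj huv.symm, .inr (hw ▸ huv.symm)⟩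
    · exact ⟨w, hw, .inl rfl⟩
  exact (domNum_le_ncard hdom).trans_lt (ncard_lt_card (by simp))

theorem DominatesOff.isDomSet_union (hdom : DominatesOff G D₁ D₂) : IsDomSet G (D₁ ∪ D₂) :=
  fun v => by
    by_cases hv : v ∈ D₂
    · exact ⟨v, .inr hv, .inl rfl⟩
    · obtain hv | ⟨u, hu, huv⟩ := hdom v hv
      · exact ⟨v, .inl hv, .inl rfl⟩
      · exact ⟨u, .inl hu, .inr huv⟩

theorem DominatesOff.nonempty [Finite V] (hdom : DominatesOff G D₁ D₂)
    (hlt : domNum G < Nat.card V) (hcard : D₂.ncard ≤ domNum G) : D₁.Nonempty := by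
  by_contra h
  rw [not_nonempty_iff_eq_empty] at h
  have hD₂ : D₂ = univ :=
    eq_univ_of_forall fun v => by_contra fun hv => by simpa [h] using hdom v hv
  rw [hD₂, ncard_univ] at hcard
  omega

theorem DominatesOff.sepGammaSet [Finite V] (hdom : DominatesOff G D₁ D₂)
    (hD₁ : D₁.Nonempty) (hD₂ : D₂.Nonempty) (hcard : D₁.ncard + D₂.ncard ≤ domNum G) :
    SepGammaSet G D₁ D₂ := by
  have hle := domNum_le_ncard hdom.isDomSet_union
  have hsum := ncard_union_add_ncard_inter D₁ D₂
  have hinter : D₁ ∩ D₂ = ∅ := (ncard_eq_zero).1 (by omega)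
  refine ⟨hD₁, hD₂, disjoint_iff_inter_eq_empty.2 hinter, hdom.isDomSet_union, by omega,
    fun v hv => ?_⟩
  obtain h | h := hdom v fun h => hv (.inr h)
  · exact (hv (.inl h)).elim
  · exact h

theorem SepGammaSet.disjoint (h : SepGammaSet G D₁ D₂) : Disjoint D₁ D₂ :=
  h.2.2.1

theorem SepGammaSet.exists_adj_of_notMem (h : SepGammaSet G D₁ D₂) {v : V}
    (hv : v ∉ D₁ ∪ D₂) : ∃ u ∈ D₁, G.Adj u v :=
  h.2.2.2.2.2 v hv

theorem SepGammaSet.not_adj_of_mem_snd [Finite V] {a c : V} (h : SepGammaSet G D₁ D₂)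
    (ha : a ∈ D₂) (hc : c ∈ D₁ ∪ D₂) : ¬ G.Adj c a := by
  intro hca
  obtain ⟨-, -, hdisj, -, hcard, hout⟩ := h
  have hdom : IsDomSet G ((D₁ ∪ D₂) \ {a}) := fun v => by
    by_cases hva : v = a
    · exact ⟨c, ⟨hc, G.ne_of_adj hca⟩, .inr (hva ▸ hca)⟩
    by_cases hv : v ∈ D₁ ∪ D₂
    · exact ⟨v, ⟨hv, hva⟩, .inl rfl⟩
    obtain ⟨u, hu, huv⟩ := hout v hv
    exact ⟨u, ⟨.inl hu, fun hua => disjoint_left.1 hdisj hu (hua ▸ ha)⟩, .inr huv⟩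
  have := ncard_sdiff_singleton_lt_of_mem (mem_union_right D₁ ha)
  have := domNum_le_ncard hdom
  omega

end Domination

section Prism

variable {G : SimpleGraph V} {π : Equiv.Perm V} {E : Set (V ⊕ V)}

theorem IsDomSet.prism_inl (hE : IsDomSet (prism G π) E) :
    DominatesOff G (Sum.inl ⁻¹' E) (π ⁻¹' (Sum.inr ⁻¹' E)) := by
  intro v hv
  obtain ⟨u | u, hu, h | h⟩ := hE (Sum.inl v)
  · exact .inl (Sum.inl_injective h ▸ hu)
  · exact .inr ⟨u, hu, h⟩
  · exact absurd h Sum.inr_ne_inl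
  · exact (hv (show Sum.inr (π v) ∈ E from (show π v = u from h) ▸ hu)).elim

theorem IsDomSet.prism_inr (hE : IsDomSet (prism G π) E) :
    DominatesOff G (Sum.inr ⁻¹' E) (π '' (Sum.inl ⁻¹' E)) := by
  intro v hv
  obtain ⟨u | u, hu, h | h⟩ := hE (Sum.inr v)
  · exact absurd h Sum.inl_ne_inr
  · exact absurd ⟨u, hu, h⟩ hv
  · exact .inl (Sum.inr_injective h ▸ hu)
  · exact .inr ⟨u, hu, h⟩

variable [Finite V]

theorem domNum_le_domNum_prism : domNum G ≤ domNum (prism G π) := by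
  obtain ⟨E, hE, hEcard⟩ := exists_isDomSet_ncard_eq_domNum (prism G π)
  calc domNum G ≤ (Sum.inl ⁻¹' E ∪ π ⁻¹' (Sum.inr ⁻¹' E)).ncard :=
        domNum_le_ncard hE.prism_inl.isDomSet_union
    _ ≤ (Sum.inl ⁻¹' E).ncard + (π ⁻¹' (Sum.inr ⁻¹' E)).ncard := ncard_union_le _ _
    _ = domNum (prism G π) := by
        rw [π.ncard_preimage, ncard_preimage_inl_add_ncard_preimage_inr, hEcard]

theorem exists_sepGammaSet_of_domNum_prism_le (hlt : domNum G < Nat.card V)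
    (hle : domNum (prism G π) ≤ domNum G) :
    ∃ A₁ A₂, SepGammaSet G A₁ A₂ ∧ SepGammaSet G (π '' A₂) (π '' A₁) := by
  obtain ⟨E, hE, hEcard⟩ := exists_isDomSet_ncard_eq_domNum (prism G π)
  have hcard := ncard_preimage_inl_add_ncard_preimage_inr E
  have hX := hE.prism_inl.nonempty hlt (by rw [π.ncard_preimage]; omega)
  have hY := hE.prism_inr.nonempty hlt (by rw [ncard_image_of_injective _ π.injective]; omega)
  refine ⟨_, _, hE.prism_inl.sepGammaSet hX (hY.preimage π.surjective)
    (by rw [π.ncard_preimage]; omega), ?_⟩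
  rw [Equiv.image_preimage]
  exact hE.prism_inr.sepGammaSet hY (hX.image π)
    (by rw [ncard_image_of_injective _ π.injective]; omega)

end Prism

section ClosedNbhdCycle

variable {G : SimpleGraph V} {x : V}

theorem C3Free.notMem_closedNbhd (hx : C3Free G x) {z a : V} (hz : G.Adj x z) (ha : G.Adj a z)
    (hax : a ≠ x) : a ∉ closedNbhd G x := by
  rintro (rfl | hxa)
  · exact hax rfl
  · exact hx.2 a z hxa hz ha

theorem c3Free_of_bipartite {s : Set V} (hs : ∀ u v, G.Adj u v → (u ∈ s ↔ v ∉ s))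
    (hx : ∃ y, G.Adj x y) : C3Free G x := by
  refine ⟨hx, fun u v hu hv huv => ?_⟩
  have := hs x u hu
  have := hs x v hv
  have := hs u v huv
  tauto

theorem adj_apply_self_of_isCycleOn {π : Equiv.Perm V} (hx : ∃ y, G.Adj x y)
    (hπ : π.IsCycleOn (closedNbhd G x)) : G.Adj x (π x) := by
  obtain ⟨y, hxy⟩ := hx
  have hS : (closedNbhd G x).Nontrivial := ⟨x, mem_insert x _, y, .inr hxy, G.ne_of_adj hxy⟩
  exact (hπ.1.mapsTo (mem_insert x _)).resolve_left (hπ.apply_ne hS (mem_insert x _))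

variable [Finite V] {π : Equiv.Perm V} {A₁ A₂ : Set V}

theorem notMem_snd_of_sepGammaSet (hx : C3Free G x) (hπ : π.IsCycleOn (closedNbhd G x))
    (hfix : ∀ v ∉ closedNbhd G x, π v = v) (h₁ : SepGammaSet G A₁ A₂)
    (h₂ : SepGammaSet G (π '' A₂) (π '' A₁)) : x ∉ A₂ := by
  intro hx₂
  have hxz := adj_apply_self_of_isCycleOn hx.1 hπ
  have hz : π x ∉ A₁ ∪ A₂ := fun hz => h₁.not_adj_of_mem_snd hx₂ hz hxz.symm
  obtain ⟨a, ha, haz⟩ := h₁.exists_adj_of_notMem hz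
  have hax : a ≠ x := fun h => disjoint_left.1 h₁.disjoint ha (h ▸ hx₂)
  have hfa : π a = a := hfix a (hx.notMem_closedNbhd hxz haz hax)
  exact h₂.not_adj_of_mem_snd ⟨a, ha, hfa⟩ (.inl ⟨x, hx₂, rfl⟩) haz.symm

theorem notMem_fst_of_sepGammaSet (hfix : ∀ v ∉ closedNbhd G x, π v = v)
    (h₁ : SepGammaSet G A₁ A₂) (h₂ : SepGammaSet G (π '' A₂) (π '' A₁)) (hxB₁ : x ∉ π '' A₁) :
    x ∉ A₁ := by
  intro hx₁
  have hA₂ : ∀ a ∈ A₂, a ∉ closedNbhd G x := by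
    rintro a ha (rfl | hxa)
    · exact disjoint_left.1 h₁.disjoint hx₁ ha
    · exact h₁.not_adj_of_mem_snd ha (.inl hx₁) hxa
  have hB₂ : ∀ b ∈ π '' A₂, b ∉ closedNbhd G x := by
    rintro _ ⟨a, ha, rfl⟩
    rw [hfix a (hA₂ a ha)]
    exact hA₂ a ha
  by_cases hxB₂ : x ∈ π '' A₂
  · exact hB₂ x hxB₂ (mem_insert x _)
  obtain ⟨b, hb, hbx⟩ := h₂.exists_adj_of_notMem (v := x) (by rintro (h | h) <;> contradiction)
  exact hB₂ b hb (.inr hbx.symm)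

theorem mem_of_adj_of_mem_image_of_sepGammaSet (hx : C3Free G x)
    (hfix : ∀ v ∉ closedNbhd G x, π v = v) (h₁ : SepGammaSet G A₁ A₂)
    (h₂ : SepGammaSet G (π '' A₂) (π '' A₁)) (hx₁ : x ∉ A₁) {z : V} (hz : G.Adj x z)
    (hzB : z ∈ π '' (A₁ ∪ A₂)) : z ∈ A₁ ∪ A₂ := by
  by_contra hzA
  obtain ⟨a, ha, haz⟩ := h₁.exists_adj_of_notMem hzA
  have hfa : π a = a := hfix a (hx.notMem_closedNbhd hz haz (ha.ne_of_notMem hx₁))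
  rw [image_union, union_comm] at hzB
  exact h₂.not_adj_of_mem_snd ⟨a, ha, hfa⟩ hzB haz.symm

theorem not_sepGammaSet_image_swap (hx : C3Free G x) (hπ : π.IsCycleOn (closedNbhd G x))
    (hfix : ∀ v ∉ closedNbhd G x, π v = v) (h₁ : SepGammaSet G A₁ A₂) :
    ¬ SepGammaSet G (π '' A₂) (π '' A₁) := by
  intro h₂
  have hfix' : ∀ v ∉ closedNbhd G x, π⁻¹ v = v := fun v hv =>
    Equiv.Perm.inv_eq_iff_eq.2 (hfix v hv).symm
  have h₁' : SepGammaSet G (⇑π⁻¹ '' (π '' A₁)) (⇑π⁻¹ '' (π '' A₂)) := by simpa using h₁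
  have hx₂ := notMem_snd_of_sepGammaSet hx hπ hfix h₁ h₂
  have hxB₁ := notMem_snd_of_sepGammaSet hx hπ.inv hfix' h₂ h₁'
  have hx₁ := notMem_fst_of_sepGammaSet hfix h₁ h₂ hxB₁
  have hxB₂ := notMem_fst_of_sepGammaSet hfix' h₂ h₁' (by simpa using hx₂)
  have hxA : x ∉ A₁ ∪ A₂ := by rintro (h | h) <;> contradiction
  have hxB : x ∉ π '' (A₁ ∪ A₂) := by rw [image_union]; rintro (h | h) <;> contradiction
  obtain ⟨u, hu, hux⟩ := h₁.exists_adj_of_notMem hxA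
  have horbit : ∀ n : ℕ, (π ^ n) u ∈ (A₁ ∪ A₂) ∩ closedNbhd G x := by
    intro n
    induction n with
    | zero => exact ⟨.inl hu, .inr hux.symm⟩
    | succ n ih =>
      rw [pow_succ', Equiv.Perm.mul_apply]
      have hB := mem_image_of_mem π ih.1
      have hS := hπ.1.mapsTo ih.2
      have hadj : G.Adj x (π ((π ^ n) u)) := hS.resolve_left fun h => hxB (h ▸ hB)
      exact ⟨mem_of_adj_of_mem_image_of_sepGammaSet hx hfix h₁ h₂ hx₁ hadj hB, hS⟩
  obtain ⟨n, hn⟩ := hπ.exists_pow_eq' (toFinite _) (.inr hux.symm) (mem_insert x _)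
  exact hxA (hn ▸ (horbit n).1)

theorem domNum_lt_domNum_prism_of_c3Free (hx : C3Free G x)
    (hπ : π.IsCycleOn (closedNbhd G x)) (hfix : ∀ v ∉ closedNbhd G x, π v = v) :
    domNum G < domNum (prism G π) := by
  refine domNum_le_domNum_prism.lt_of_not_ge fun hle => ?_
  obtain ⟨A₁, A₂, h₁, h₂⟩ :=
    exists_sepGammaSet_of_domNum_prism_le (domNum_lt_card_of_adj hx.1.choose_spec) hle
  exact not_sepGammaSet_image_swap hx hπ hfix h₁ h₂

end ClosedNbhdCycle

/-- a bipartite graph with at least one edge is not a universal fixer. -/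
theorem not_universal_fixer_of_bipartite [Fintype V] (G : SimpleGraph V)
    (hedge : ∃ u v : V, G.Adj u v)
    (hbip : ∃ s : Set V, ∀ u v : V, G.Adj u v → (u ∈ s ↔ v ∉ s)) :
    ∃ π : Equiv.Perm V, domNum G < domNum (prism G π) := by
  obtain ⟨x, y, hxy⟩ := hedge
  obtain ⟨s, hs⟩ := hbip
  have hx : C3Free G x := c3Free_of_bipartite hs ⟨y, hxy⟩
  obtain ⟨π, hπ, hsupp⟩ := (closedNbhd G x).toFinite.countable.exists_cycleOn
  have hfix : ∀ v ∉ closedNbhd G x, π v = v := fun v hv => not_not.1 fun h => hv (hsupp h)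
  exact ⟨π, domNum_lt_domNum_prism_of_c3Free hx hπ hfix⟩
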